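/- arXiv:0805.4777 — 2 statements merged into one kernel-verified Lean document; each statement's English description precedes it below -/
import Mathlib

section
/- For every l ≥ 0, the assignment Q_l([x],[y]) := P(N^l x, y) for x, y ∈ W_l gives a well-defined bilinear form Q_l : Gr^W_l × Gr^W_l → ℂ; this form is nondegenerate and satisfies Q_l(ξ,η) = (-1)^{w-l}·Q_l(η,ξ) for all ξ, η ∈ Gr^W_l. -/
/-!
The form `P` vanishes on `W a × W b` whenever `a + b < 0`: by induction on the smaller index, any
element of `W (-l)` is `N ^ l z` modulo `W (-l - 1)` with `z ∈ W l`, and moving `N ^ l` to the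
other side lowers the smaller index. Hence `W (-k - 1) ⊆ (W k)^⊥`, and the isomorphisms
`N ^ l : Gr_l ≅ Gr_{-l}` force `dim W k + dim W (-k - 1) = dim V`, so this inclusion is an
equality. Nondegeneracy of `Q_l` is then injectivity of `N ^ l` on `Gr_l`, and the sign comes from
`P (N x) y = -P x (N y)`.
-/

open Module

theorem Submodule.finrank_add_finrank_eq_of_map_quotient_bijective
    {K V V' : Type*} [Field K] [AddCommGroup V] [Module K V] [AddCommGroup V'] [Module K V']
    [FiniteDimensional K V] [FiniteDimensional K V'] (f : V →ₗ[K] V')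
    {A A' : Submodule K V} {C C' : Submodule K V'} (hA : A' ≤ A) (hC : C' ≤ C)
    (hmaps : ∀ x ∈ A, f x ∈ C) (hker : ∀ x ∈ A, f x ∈ C' ↔ x ∈ A')
    (hsurj : ∀ y ∈ C, ∃ x ∈ A, f x - y ∈ C') :
    finrank K A + finrank K C' = finrank K C + finrank K A' := by
  let g : A →ₗ[K] C ⧸ C'.comap C.subtype := (C'.comap C.subtype).mkQ ∘ₗ f.restrict hmaps
  have hg_ker : LinearMap.ker g = A'.comap A.subtype := by
    ext ⟨x, hx⟩
    simp [g, Submodule.Quotient.mk_eq_zero, LinearMap.restrict_apply, hker x hx]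
  have hg_range : LinearMap.range g = ⊤ := by
    refine LinearMap.range_eq_top.2 fun c => ?_
    induction c using Submodule.Quotient.induction_on with
    | _ y =>
      obtain ⟨x, hx, hxy⟩ := hsurj y y.2
      refine ⟨⟨x, hx⟩, (Submodule.Quotient.eq _).2 ?_⟩
      simpa [LinearMap.restrict_apply] using hxy
  have h_rank := g.finrank_range_add_finrank_ker
  rw [hg_ker, hg_range, finrank_top, (Submodule.comapSubtypeEquivOfLe hA).finrank_eq] at h_rank
  have h_quot := Submodule.finrank_quotient_add_finrank (C'.comap C.subtype)
  rw [(Submodule.comapSubtypeEquivOfLe hC).finrank_eq] at h_quot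
  omega

section

variable {K V : Type*} [Field K] [AddCommGroup V] [Module K V]
  {N : Module.End K V} {P : LinearMap.BilinForm K V}

theorem LinearMap.IsSkewAdjoint.pow_apply_left (hN : P.IsSkewAdjoint N) (k : ℕ) (x y : V) :
    P ((N ^ k) x) y = (-1) ^ k * P x ((N ^ k) y) := by
  induction k generalizing x with
  | zero => simp
  | succ k ih =>
    have hcomm : (N ^ k) (N y) = N ((N ^ k) y) := LinearMap.congr_fun (pow_mul_comm' N k) y
    rw [pow_succ, Module.End.mul_apply, ih, hN, Module.End.mul_apply, hcomm, Pi.neg_apply,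
      map_neg, pow_succ]
    ring

theorem LinearMap.IsSkewAdjoint.pow_apply_left_eq_neg_one_zpow_mul {w : ℤ}
    (hPsym : ∀ x y, P x y = (-1) ^ w * P y x) (hN : P.IsSkewAdjoint N) (l : ℕ) (x y : V) :
    P ((N ^ l) x) y = (-1) ^ (w - l) * P ((N ^ l) y) x := by
  rw [hPsym, hN.pow_apply_left, zpow_sub₀ (by norm_num), zpow_natCast]
  field_simp

end

/-- A weight filtration of `N` centred at `0`; the last two fields say that `N ^ l` induces a
bijection `Gr_l → Gr_{-l}` for `l ≥ 0`. -/
structure IsWeightFiltration {K V : Type*} [Field K] [AddCommGroup V] [Module K V]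
    (N : Module.End K V) (W : ℤ → Submodule K V) : Prop where
  mono : Monotone W
  exists_eq_bot : ∃ a : ℤ, ∀ l ≤ a, W l = ⊥
  exists_eq_top : ∃ b : ℤ, ∀ l, b ≤ l → W l = ⊤
  apply_mem : ∀ l : ℤ, ∀ x ∈ W l, N x ∈ W (l - 2)
  mem_of_pow_apply_mem : ∀ l : ℕ, ∀ x ∈ W (l : ℤ),
    (N ^ l) x ∈ W (-(l : ℤ) - 1) → x ∈ W ((l : ℤ) - 1)
  exists_pow_apply_sub_mem : ∀ l : ℕ, ∀ y ∈ W (-(l : ℤ)),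
    ∃ x ∈ W (l : ℤ), (N ^ l) x - y ∈ W (-(l : ℤ) - 1)

namespace IsWeightFiltration

variable {K V : Type*} [Field K] [AddCommGroup V] [Module K V]
  {N : Module.End K V} {W : ℤ → Submodule K V} {P : LinearMap.BilinForm K V}

theorem pow_apply_mem (hW : IsWeightFiltration N W) (k : ℕ) {a : ℤ} {x : V} (hx : x ∈ W a) :
    (N ^ k) x ∈ W (a - 2 * k) := by
  induction k generalizing a x with
  | zero => simpa using hx
  | succ k ih =>
    rw [pow_succ, Module.End.mul_apply]
    convert ih (hW.apply_mem a x hx) using 2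
    push_cast
    ring

theorem apply_eq_zero_of_le_of_add_neg (hW : IsWeightFiltration N W) (hP : P.IsRefl)
    (hN : P.IsSkewAdjoint N) {a b : ℤ} (hab : a ≤ b) (hneg : a + b < 0) {x y : V}
    (hx : x ∈ W a) (hy : y ∈ W b) : P x y = 0 := by
  obtain ⟨c, hc⟩ := hW.exists_eq_bot
  suffices key : ∀ n : ℕ, ∀ a b : ℤ, a ≤ c + n → a ≤ b → a + b < 0 →
      ∀ x ∈ W a, ∀ y ∈ W b, P x y = 0 from
    key (a - c).toNat a b (by omega) hab hneg x hx y hy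
  intro n
  induction n with
  | zero =>
    intro a b ha _ _ x hx y _
    rw [hc a (by omega), Submodule.mem_bot] at hx
    simp [hx]
  | succ n ih =>
    intro a b ha hab hneg x hx y hy
    obtain ⟨l, rfl⟩ : ∃ l : ℕ, a = -l := ⟨(-a).toNat, by omega⟩
    obtain ⟨z, hz, hzx⟩ := hW.exists_pow_apply_sub_mem l x hx
    have hzy : P ((N ^ l) z) y = 0 := by
      have := ih _ _ (by omega) (by omega) (by omega) _ (hW.pow_apply_mem l hy) z hz
      rw [hN.pow_apply_left, hP _ _ this, mul_zero]
    have hzxy : P ((N ^ l) z - x) y = 0 := ih _ _ (by omega) (by omega) (by omega) _ hzx y hy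
    rwa [map_sub, LinearMap.sub_apply, hzy, zero_sub, neg_eq_zero] at hzxy

theorem apply_eq_zero_of_add_neg (hW : IsWeightFiltration N W) (hP : P.IsRefl)
    (hN : P.IsSkewAdjoint N) {a b : ℤ} (hneg : a + b < 0) {x y : V}
    (hx : x ∈ W a) (hy : y ∈ W b) : P x y = 0 := by
  rcases le_total a b with hab | hba
  · exact hW.apply_eq_zero_of_le_of_add_neg hP hN hab hneg hx hy
  · exact hP _ _ (hW.apply_eq_zero_of_le_of_add_neg hP hN hba (by omega) hy hx)

theorem finrank_add_finrank_neg_sub_one_eq [FiniteDimensional K V] (hW : IsWeightFiltration N W)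
    (l : ℕ) : finrank K (W l) + finrank K (W (-l - 1))
      = finrank K (W (-l)) + finrank K (W (l - 1)) :=
  Submodule.finrank_add_finrank_eq_of_map_quotient_bijective (N ^ l)
    (hW.mono (by omega)) (hW.mono (by omega))
    (fun x hx => by simpa [two_mul] using hW.pow_apply_mem l hx)
    (fun x hx => ⟨hW.mem_of_pow_apply_mem l x hx,
      fun hx' => by convert hW.pow_apply_mem l hx' using 2; ring⟩)
    (hW.exists_pow_apply_sub_mem l)

theorem finrank_add_finrank_neg_sub_one_succ [FiniteDimensional K V]
    (hW : IsWeightFiltration N W) (k : ℤ) :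
    finrank K (W (k + 1)) + finrank K (W (-(k + 1) - 1))
      = finrank K (W k) + finrank K (W (-k - 1)) := by
  rcases le_or_gt (-1) k with hk | hk
  · obtain ⟨l, rfl⟩ : ∃ l : ℕ, k = l - 1 := ⟨(k + 1).toNat, by omega⟩
    rw [sub_add_cancel, show -((l : ℤ) - 1) - 1 = -l by ring]
    have := hW.finrank_add_finrank_neg_sub_one_eq l
    omega
  · obtain ⟨l, rfl⟩ : ∃ l : ℕ, k = -l - 1 := ⟨(-k - 1).toNat, by omega⟩
    rw [sub_add_cancel, show -(-(l : ℤ)) - 1 = l - 1 by ring,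
      show -(-(l : ℤ) - 1) - 1 = l by ring]
    have := hW.finrank_add_finrank_neg_sub_one_eq l
    omega

theorem finrank_add_finrank_neg_sub_one [FiniteDimensional K V] (hW : IsWeightFiltration N W)
    (k : ℤ) : finrank K (W k) + finrank K (W (-k - 1)) = finrank K V := by
  obtain ⟨a, ha⟩ := hW.exists_eq_bot
  obtain ⟨b, hb⟩ := hW.exists_eq_top
  set m := max (max b (-a - 1)) k
  have hm : finrank K (W m) + finrank K (W (-m - 1)) = finrank K V := by
    rw [hb m (by omega), ha (-m - 1) (by omega), finrank_top, finrank_bot, add_zero]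
  refine Eq.trans ?_ hm
  exact Int.leInduction (motive := fun n _ => _ = finrank K (W n) + finrank K (W (-n - 1))) rfl
    (fun n _ ih => ih.trans (hW.finrank_add_finrank_neg_sub_one_succ n).symm) m
    (le_max_right _ _)

theorem orthogonal_eq [FiniteDimensional K V] (hW : IsWeightFiltration N W) (hP : P.IsRefl)
    (hPnd : P.SeparatingLeft) (hN : P.IsSkewAdjoint N) (k : ℤ) :
    P.orthogonal (W k) = W (-k - 1) := by
  have hle : W (-k - 1) ≤ P.orthogonal (W k) := fun x hx y hy =>
    hW.apply_eq_zero_of_add_neg hP hN (by omega) hy hx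
  refine (Submodule.eq_of_le_of_finrank_le hle ?_).symm
  rw [LinearMap.BilinForm.finrank_orthogonal (hP.nondegenerate_iff_separatingLeft.2 hPnd)]
  have := hW.finrank_add_finrank_neg_sub_one k
  omega

theorem apply_pow_apply_eq_of_sub_mem (hW : IsWeightFiltration N W) (hP : P.IsRefl)
    (hN : P.IsSkewAdjoint N) (l : ℕ) {x x' y y' : V} (hx' : x' ∈ W l) (hy : y ∈ W l)
    (hxx' : x - x' ∈ W (l - 1)) (hyy' : y - y' ∈ W (l - 1)) :
    P ((N ^ l) x) y = P ((N ^ l) x') y' := by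
  have hx : P ((N ^ l) (x - x')) y = 0 :=
    hW.apply_eq_zero_of_add_neg hP hN (by omega) (hW.pow_apply_mem l hxx') hy
  have hy : P ((N ^ l) x') (y - y') = 0 :=
    hW.apply_eq_zero_of_add_neg hP hN (by omega) (hW.pow_apply_mem l hx') hyy'
  rw [map_sub, map_sub, LinearMap.sub_apply, sub_eq_zero] at hx
  rw [map_sub, sub_eq_zero] at hy
  rw [hx, hy]

theorem mem_of_forall_apply_pow_apply_eq_zero [FiniteDimensional K V]
    (hW : IsWeightFiltration N W) (hP : P.IsRefl) (hPnd : P.SeparatingLeft)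
    (hN : P.IsSkewAdjoint N) (l : ℕ) {x : V} (hx : x ∈ W l)
    (h : ∀ y ∈ W l, P ((N ^ l) x) y = 0) : x ∈ W (l - 1) := by
  refine hW.mem_of_pow_apply_mem l x hx ?_
  rw [← hW.orthogonal_eq hP hPnd hN]
  exact fun y hy => hP _ _ (h y hy)

end IsWeightFiltration

theorem stmt_4_general {V : Type*} [AddCommGroup V] [Module ℂ V] [FiniteDimensional ℂ V]
    (N : Module.End ℂ V)
    (W : ℤ → Submodule ℂ V)
    (hmono : Monotone W)
    (hbot : ∃ a : ℤ, ∀ l ≤ a, W l = ⊥)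
    (htop : ∃ b : ℤ, ∀ l, b ≤ l → W l = ⊤)
    (hshift : ∀ l : ℤ, ∀ x ∈ W l, N x ∈ W (l - 2))
    (hisoinj : ∀ l : ℕ, ∀ x ∈ W (l : ℤ),
      (N ^ l) x ∈ W (-(l : ℤ) - 1) → x ∈ W ((l : ℤ) - 1))
    (hisosurj : ∀ l : ℕ, ∀ y ∈ W (-(l : ℤ)),
      ∃ x ∈ W (l : ℤ), (N ^ l) x - y ∈ W (-(l : ℤ) - 1))
    (w : ℤ) (P : V →ₗ[ℂ] V →ₗ[ℂ] ℂ)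
    (hPnd : ∀ x : V, (∀ y : V, P x y = 0) → x = 0)
    (hPsym : ∀ x y : V, P x y = (-1 : ℂ) ^ w * P y x)
    (hPN : ∀ x y : V, P (N x) y + P x (N y) = 0) :
    -- well-definedness of Q_l on Gr^W_l × Gr^W_l
    (∀ l : ℕ, ∀ x ∈ W (l : ℤ), ∀ x' ∈ W (l : ℤ), ∀ y ∈ W (l : ℤ), ∀ y' ∈ W (l : ℤ),
      x - x' ∈ W ((l : ℤ) - 1) → y - y' ∈ W ((l : ℤ) - 1) →
      P ((N ^ l) x) y = P ((N ^ l) x') y') ∧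
    -- nondegeneracy of Q_l, in the first argument …
    (∀ l : ℕ, ∀ x ∈ W (l : ℤ),
      (∀ y ∈ W (l : ℤ), P ((N ^ l) x) y = 0) → x ∈ W ((l : ℤ) - 1)) ∧
    -- … and in the second argument
    (∀ l : ℕ, ∀ y ∈ W (l : ℤ),
      (∀ x ∈ W (l : ℤ), P ((N ^ l) x) y = 0) → y ∈ W ((l : ℤ) - 1)) ∧
    -- (-1)^{w-l}-symmetry of Q_l
    (∀ l : ℕ, ∀ x ∈ W (l : ℤ), ∀ y ∈ W (l : ℤ),
      P ((N ^ l) x) y = (-1 : ℂ) ^ (w - (l : ℤ)) * P ((N ^ l) y) x) := by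
  have hW : IsWeightFiltration N W := ⟨hmono, hbot, htop, hshift, hisoinj, hisosurj⟩
  have hP : P.IsRefl := fun x y h => by rw [hPsym, h, mul_zero]
  have hN : LinearMap.IsSkewAdjoint P N := fun x y => by
    rw [Pi.neg_apply, map_neg]
    exact eq_neg_of_add_eq_zero_left (hPN x y)
  have hsym := hN.pow_apply_left_eq_neg_one_zpow_mul hPsym
  refine ⟨fun l _ _ x' hx' y hy _ _ hxx' hyy' =>
      hW.apply_pow_apply_eq_of_sub_mem hP hN l hx' hy hxx' hyy',
    fun l x hx h => hW.mem_of_forall_apply_pow_apply_eq_zero hP hPnd hN l hx h,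
    fun l y hy h => hW.mem_of_forall_apply_pow_apply_eq_zero hP hPnd hN l hy fun x hx => ?_,
    fun l x _ y _ => hsym l x y⟩
  rw [hsym, h x hx, mul_zero]

/-- With `V, N, W, P, w` as in the weight-filtration setting, for every
`l ≥ 0` the assignment `Q_l([x],[y]) := P(N^l x, y)` for `x, y ∈ W_l` gives a well-defined
bilinear form on `Gr^W_l = W_l/W_{l-1}`; this form is nondegenerate and is
`(-1)^{w-l}`-symmetric.

Classes in `Gr^W_l` are treated via representatives in `W l` modulo `W (l-1)`. -/
theorem stmt_4 {V : Type*} [AddCommGroup V] [Module ℂ V] [FiniteDimensional ℂ V]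
    (N : Module.End ℂ V) (hnil : IsNilpotent N)
    (W : ℤ → Submodule ℂ V)
    (hmono : Monotone W)
    (hbot : ∃ a : ℤ, ∀ l ≤ a, W l = ⊥)
    (htop : ∃ b : ℤ, ∀ l, b ≤ l → W l = ⊤)
    (hshift : ∀ l : ℤ, ∀ x ∈ W l, N x ∈ W (l - 2))
    (hisoinj : ∀ l : ℕ, ∀ x ∈ W (l : ℤ),
      (N ^ l) x ∈ W (-(l : ℤ) - 1) → x ∈ W ((l : ℤ) - 1))
    (hisosurj : ∀ l : ℕ, ∀ y ∈ W (-(l : ℤ)),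
      ∃ x ∈ W (l : ℤ), (N ^ l) x - y ∈ W (-(l : ℤ) - 1))
    (w : ℤ) (P : V →ₗ[ℂ] V →ₗ[ℂ] ℂ)
    (hPnd : ∀ x : V, (∀ y : V, P x y = 0) → x = 0)
    (hPsym : ∀ x y : V, P x y = (-1 : ℂ) ^ w * P y x)
    (hPN : ∀ x y : V, P (N x) y + P x (N y) = 0) :
    -- well-definedness of Q_l on Gr^W_l × Gr^W_l
    (∀ l : ℕ, ∀ x ∈ W (l : ℤ), ∀ x' ∈ W (l : ℤ), ∀ y ∈ W (l : ℤ), ∀ y' ∈ W (l : ℤ),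
      x - x' ∈ W ((l : ℤ) - 1) → y - y' ∈ W ((l : ℤ) - 1) →
      P ((N ^ l) x) y = P ((N ^ l) x') y') ∧
    -- nondegeneracy of Q_l, in the first argument …
    (∀ l : ℕ, ∀ x ∈ W (l : ℤ),
      (∀ y ∈ W (l : ℤ), P ((N ^ l) x) y = 0) → x ∈ W ((l : ℤ) - 1)) ∧
    -- … and in the second argument
    (∀ l : ℕ, ∀ y ∈ W (l : ℤ),
      (∀ x ∈ W (l : ℤ), P ((N ^ l) x) y = 0) → y ∈ W ((l : ℤ) - 1)) ∧
    -- (-1)^{w-l}-symmetry of Q_l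
    (∀ l : ℕ, ∀ x ∈ W (l : ℤ), ∀ y ∈ W (l : ℤ),
      P ((N ^ l) x) y = (-1 : ℂ) ^ (w - (l : ℤ)) * P ((N ^ l) y) x) :=
  stmt_4_general N W hmono hbot htop hshift hisoinj hisosurj w P hPnd hPsym hPN
end

section
/- There exist elements u₁,…,u_μ ∈ L₀ ∩ L_∞ such that the μ×μ complex matrix (z^{-w}·P(u_i,u_j))_{i,j} (whose entries are constant Laurent polynomials, identified with complex numbers) is invertible, if and only if k_i = 0 for all 1 ≤ i ≤ μ. -/
open LaurentPolynomial

variable {μ : ℕ} {W : Type*} [AddCommGroup W] [Module (LaurentPolynomial ℂ) W]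
  [Module ℂ W] [IsScalarTower ℂ (LaurentPolynomial ℂ) W]

/-- The lattice `L₀ = ⊕ᵢ ℂ[z]·vᵢ`, as a `ℂ`-subspace of `W`: the `ℂ`-span of the vectors
`z^m·vᵢ`, `m ≥ 0`. -/
noncomputable def latticeZero (v : Module.Basis (Fin μ) (LaurentPolynomial ℂ) W) : Submodule ℂ W :=
  Submodule.span ℂ {x : W | ∃ (i : Fin μ) (m : ℕ), x = (T (m : ℤ) : LaurentPolynomial ℂ) • v i}

/-- The lattice `L_∞ = ⊕ᵢ ℂ[z⁻¹]·z^{kᵢ}vᵢ`, as a `ℂ`-subspace of `W`: the `ℂ`-span of the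
vectors `z^{kᵢ-m}·vᵢ`, `m ≥ 0`. -/
noncomputable def latticeInfty (v : Module.Basis (Fin μ) (LaurentPolynomial ℂ) W)
    (k : Fin μ → ℤ) : Submodule ℂ W :=
  Submodule.span ℂ
    {x : W | ∃ (i : Fin μ) (m : ℕ), x = (T (k i - m) : LaurentPolynomial ℂ) • v i}

/-!
Let `A` be the matrix of `z^{-w}P` on the basis `v`; its determinant is a nonzero constant `a`.
Since `P` is `j`-sesquilinear, its matrix on a family `u` is `Fᵀ A j(F)` with `F` the coordinate
matrix of `u` in `v`. On `z^{kᵢ}vᵢ` this gives determinant `±a z^{2Σkᵢ}`, which lies in `ℂ[z⁻¹]`,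
so `Σkᵢ ≤ 0`. If some `kₗ < 0`, the `l`-th coordinate of every vector of `L₀ ∩ L_∞` has support in
`[0, kₗ] = ∅`, so `det F = 0` for any `u` in `L₀ ∩ L_∞` and its matrix is singular. Hence an
invertible constant matrix forces `kᵢ ≥ 0` and `Σkᵢ ≤ 0`, i.e. `k = 0`; conversely for `k = 0`
the family `v` itself works, its matrix being the one given invertible over `ℂ[z⁻¹]`.
-/

open scoped Matrix

namespace LaurentPolynomial

variable {R : Type*}

theorem prod_T {ι : Type*} [CommSemiring R] (s : Finset ι) (k : ι → ℤ) :
    ∏ i ∈ s, (T (k i) : R[T;T⁻¹]) = T (∑ i ∈ s, k i) := by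
  classical
  induction s using Finset.induction_on with
  | empty => simp
  | insert i s hi ih => rw [Finset.prod_insert hi, Finset.sum_insert hi, ih, T_add]

theorem map_T_of_map_T_one_eq_neg [CommRing R] (j : R[T;T⁻¹] →ₐ[R] R[T;T⁻¹])
    (hj : j (T 1) = -T 1) (n : ℤ) : j (T n) = C ((n.negOnePow : ℤ) : R) * T n := by
  have hT : (T 1 : R[T;T⁻¹]) * T (-1) = 1 := by rw [← T_add, add_neg_cancel, T_zero]
  have hj_inv : j (T (-1)) = -T (-1) := by
    have h := congrArg j hT
    rw [map_mul, map_one, hj] at h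
    linear_combination (-T (-1)) * h - j (T (-1)) * hT
  induction n using Int.induction_on with
  | zero => simp
  | succ n ih =>
    rw [T_add, map_mul, ih, hj, Int.negOnePow_succ, Units.val_neg, Int.cast_neg, map_neg]
    ring
  | pred n ih =>
    rw [sub_eq_add_neg, T_add, map_mul, ih, hj_inv, ← sub_eq_add_neg, Int.negOnePow_sub,
      Int.negOnePow_one, mul_neg_one, Units.val_neg, Int.cast_neg, map_neg]
    ring

variable (R) in
def nonposSubring [Ring R] : Subring R[T;T⁻¹] where
  carrier := {f | ∀ n ∈ f.coeff.support, n ≤ 0}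
  zero_mem' := by simp
  one_mem' n hn := by
    rw [← T_zero, ← one_mul (T 0), ← map_one C] at hn
    exact (Finset.mem_singleton.1 (support_C_mul_T (1 : R) 0 hn)).le
  add_mem' {f g} hf hg n hn := by
    rw [AddMonoidAlgebra.coeff_add] at hn
    exact (Finset.mem_union.1 (Finsupp.support_add hn)).elim (hf n) (hg n)
  neg_mem' {f} hf n hn := by
    rw [AddMonoidAlgebra.coeff_neg, Finsupp.support_neg] at hn
    exact hf n hn
  mul_mem' {f g} hf hg n hn := by
    classical
    obtain ⟨a, ha, b, hb, rfl⟩ :=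
      Finset.mem_add.1 (AddMonoidAlgebra.support_coeff_mul_subset f g hn)
    linarith [hf a ha, hg b hb]

theorem mem_nonposSubring [Ring R] {f : R[T;T⁻¹]} :
    f ∈ nonposSubring R ↔ ∀ n ∈ f.coeff.support, n ≤ 0 :=
  Iff.rfl

end LaurentPolynomial

theorem Matrix.det_mem_subring {R n : Type*} [CommRing R] [Fintype n] [DecidableEq n]
    (S : Subring R) (M : Matrix n n R) (hM : ∀ i j, M i j ∈ S) : M.det ∈ S := by
  have : M = S.subtype.mapMatrix (Matrix.of fun i j => (⟨M i j, hM i j⟩ : S)) := rfl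
  rw [this, ← RingHom.map_det]
  exact Subtype.prop _

namespace LinearMap

variable {R M ι κ : Type*} [CommRing R] [AddCommGroup M] [Module R M] {σ : R →+* R}

def gram (Q : M →ₗ[R] M →ₛₗ[σ] R) (u : ι → M) : Matrix ι ι R :=
  Matrix.of fun i i' => Q (u i) (u i')

@[simp]
theorem gram_apply (Q : M →ₗ[R] M →ₛₗ[σ] R) (u : ι → M) (i i' : ι) :
    Q.gram u i i' = Q (u i) (u i') :=
  rfl

theorem gram_eq_toMatrix_transpose_mul [Fintype ι] (Q : M →ₗ[R] M →ₛₗ[σ] R)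
    (v : Module.Basis ι R M) (u : κ → M) :
    Q.gram u = (v.toMatrix u)ᵀ * Q.gram v * (v.toMatrix u).map σ := by
  ext i i'
  rw [gram_apply, ← v.sum_toMatrix_smul_self u i, ← v.sum_toMatrix_smul_self u i']
  simp only [map_sum, map_smulₛₗ, LinearMap.sum_apply, LinearMap.smul_apply, smul_eq_mul,
    Matrix.mul_apply, gram_apply, Matrix.transpose_apply, Matrix.map_apply, RingHom.id_apply,
    Finset.sum_mul, Finset.mul_sum]
  refine Finset.sum_congr rfl fun l _ => Finset.sum_congr rfl fun m _ => ?_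
  ring

theorem det_gram [Fintype ι] [DecidableEq ι] (Q : M →ₗ[R] M →ₛₗ[σ] R)
    (v : Module.Basis ι R M) (u : ι → M) :
    (Q.gram u).det = (v.toMatrix u).det * (Q.gram v).det * σ (v.toMatrix u).det := by
  rw [Q.gram_eq_toMatrix_transpose_mul v, Matrix.det_mul, Matrix.det_mul,
    Matrix.det_transpose, RingHom.map_det, RingHom.mapMatrix_apply]

end LinearMap

theorem sum_nonpos_of_det_gram_mem_nonposSubring {R M ι : Type*} [CommRing R] [AddCommGroup M]
    [Module R[T;T⁻¹] M] [Fintype ι] [DecidableEq ι]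
    (j : R[T;T⁻¹] →ₐ[R] R[T;T⁻¹]) (hj : j (T 1) = -T 1)
    (Q : M →ₗ[R[T;T⁻¹]] M →ₛₗ[j.toRingHom] R[T;T⁻¹]) (v : Module.Basis ι R[T;T⁻¹] M)
    (k : ι → ℤ) {a : R} (ha : a ≠ 0) (hdet_v : (Q.gram v).det = C a)
    (hdet_kv : (Q.gram fun i => (T (k i) : R[T;T⁻¹]) • v i).det ∈ nonposSubring R) :
    ∑ i, k i ≤ 0 := by
  set S := ∑ i, k i
  set ε : R := ((S.negOnePow : ℤ) : R)
  have hdet : (Q.gram fun i => (T (k i) : R[T;T⁻¹]) • v i).det = C (a * ε) * T (S + S) := by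
    have := Q.det_gram v (v.isUnitSMul fun i => isUnit_T (k i))
    simp only [Module.Basis.toMatrix_isUnitSMul, Matrix.det_diagonal, prod_T, hdet_v] at this
    rw [show ⇑(v.isUnitSMul _) = fun i => T (k i) • v i from funext (v.isUnitSMul_apply _)] at this
    rw [this, AlgHom.toRingHom_eq_coe, RingHom.coe_coe, map_T_of_map_T_one_eq_neg j hj, map_mul,
      T_add]
    ring
  have haε : a * ε ≠ 0 := by
    rcases Int.units_eq_one_or S.negOnePow with h | h <;> simpa [ε, h]
  rw [hdet, mem_nonposSubring, support_coeff_C_mul_T_of_ne_zero haε] at hdet_kv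
  have := hdet_kv (S + S) (Finset.mem_singleton_self _)
  omega

theorem repr_mem_supported_of_mem_span (v : Module.Basis (Fin μ) (LaurentPolynomial ℂ) W)
    {s : Fin μ → Set ℤ} {x : W}
    (hx : x ∈ Submodule.span ℂ {y | ∃ i, ∃ n ∈ s i, y = (T n : LaurentPolynomial ℂ) • v i})
    (l : Fin μ) : v.repr x l ∈ AddMonoidAlgebra.supported ℂ ℂ (s l) := by
  induction hx using Submodule.span_induction with
  | mem y hy =>
    obtain ⟨i, n, hn, rfl⟩ := hy
    rw [map_smul, v.repr_self, Finsupp.smul_apply, Finsupp.single_apply]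
    split_ifs with hil
    · subst hil
      rw [smul_eq_mul, mul_one, AddMonoidAlgebra.mem_supported, ← one_mul (T n), ← map_one C]
      intro m hm
      rwa [Finset.mem_singleton.1 (support_C_mul_T 1 n hm)]
    · rw [smul_zero]
      exact zero_mem _
  | zero => simp
  | add y z _ _ hy hz => simpa using add_mem hy hz
  | smul c y _ hy =>
    rw [LinearMapClass.map_smul_of_tower, Finsupp.smul_apply]
    exact Submodule.smul_mem _ c hy

theorem repr_eq_zero_of_mem_latticeZero_inf_latticeInfty
    {v : Module.Basis (Fin μ) (LaurentPolynomial ℂ) W} {k : Fin μ → ℤ} {x : W}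
    (hx : x ∈ latticeZero v ⊓ latticeInfty v k) {l : Fin μ} (hl : k l < 0) : v.repr x l = 0 := by
  have h₀ := repr_mem_supported_of_mem_span v (s := fun _ => Set.Ici 0)
    (Submodule.span_mono (by rintro _ ⟨i, m, rfl⟩; exact ⟨i, m, by simp, rfl⟩) hx.1) l
  have h_infty := repr_mem_supported_of_mem_span v (s := fun l => Set.Iic (k l))
    (Submodule.span_mono (by rintro _ ⟨i, m, rfl⟩; exact ⟨i, k i - m, by simp, rfl⟩) hx.2) l
  ext n
  by_contra hn
  have hmem : n ∈ (v.repr x l).coeff.support := Finsupp.mem_support_iff.2 (by simpa using hn)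
  have h₀n : 0 ≤ n := h₀ hmem
  have h_inftyn : n ≤ k l := h_infty hmem
  omega

theorem nonneg_of_det_gram_ne_zero {σ : LaurentPolynomial ℂ →+* LaurentPolynomial ℂ}
    (Q : W →ₗ[LaurentPolynomial ℂ] W →ₛₗ[σ] LaurentPolynomial ℂ)
    (v : Module.Basis (Fin μ) (LaurentPolynomial ℂ) W) (k : Fin μ → ℤ) (u : Fin μ → W)
    (hu : ∀ i, u i ∈ latticeZero v ⊓ latticeInfty v k) (hdet : (Q.gram u).det ≠ 0)
    (l : Fin μ) : 0 ≤ k l := by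
  by_contra! hl
  refine hdet ?_
  rw [Q.det_gram v, Matrix.det_eq_zero_of_row_eq_zero l fun i =>
    repr_eq_zero_of_mem_latticeZero_inf_latticeInfty (hu i) hl]
  simp

theorem stmt_13_general (w : ℤ)
    (v : Module.Basis (Fin μ) (LaurentPolynomial ℂ) W)
    (k : Fin μ → ℤ)
    (j : LaurentPolynomial ℂ →ₐ[ℂ] LaurentPolynomial ℂ) (hj : j (T 1) = -T 1)
    (P : W → W → LaurentPolynomial ℂ)
    (hPadd₁ : ∀ a a' b : W, P (a + a') b = P a b + P a' b)
    (hPadd₂ : ∀ a b b' : W, P a (b + b') = P a b + P a b')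
    (hPsmul₁ : ∀ (f : LaurentPolynomial ℂ) (a b : W), P (f • a) b = f * P a b)
    (hPsmul₂ : ∀ (f : LaurentPolynomial ℂ) (a b : W), P a (f • b) = j f * P a b)
    (hmat₀ : ∃ A : Matrix (Fin μ) (Fin μ) (Polynomial ℂ), IsUnit A ∧
      ∀ i i', (A i i').toLaurent = T (-w) * P (v i) (v i'))
    (hmatInf : ∃ B Binv : Matrix (Fin μ) (Fin μ) (LaurentPolynomial ℂ),
      (∀ i i', B i i' =
        T (-w) * P ((T (k i) : LaurentPolynomial ℂ) • v i)
          ((T (k i') : LaurentPolynomial ℂ) • v i')) ∧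
      (∀ i i', ∀ m ∈ (B i i').coeff.support, m ≤ 0) ∧
      (∀ i i', ∀ m ∈ (Binv i i').coeff.support, m ≤ 0) ∧
      B * Binv = 1 ∧ Binv * B = 1)
    -- context fact: on `L₀ ∩ L_∞` the Laurent polynomial `z^{-w}·P(a,b)` is a constant
    (hconst : ∀ a ∈ latticeZero v ⊓ latticeInfty v k,
      ∀ b ∈ latticeZero v ⊓ latticeInfty v k, ∃ c : ℂ, T (-w) * P a b = LaurentPolynomial.C c) :
    (∃ u : Fin μ → W, (∀ i, u i ∈ latticeZero v ⊓ latticeInfty v k) ∧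
      ∃ G : Matrix (Fin μ) (Fin μ) ℂ,
        (∀ i i', T (-w) * P (u i) (u i') = LaurentPolynomial.C (G i i')) ∧ IsUnit G) ↔
    (∀ i, k i = 0) := by
  classical
  obtain ⟨A, hA_unit, hA⟩ := hmat₀
  obtain ⟨B, Binv, hB, hB_nonpos, -, hBBinv, -⟩ := hmatInf
  let Q : W →ₗ[LaurentPolynomial ℂ] W →ₛₗ[j.toRingHom] LaurentPolynomial ℂ :=
    LinearMap.mk₂'ₛₗ _ _ (fun a b => T (-w) * P a b) (fun a a' b => by rw [hPadd₁, mul_add])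
      (fun f a b => by rw [hPsmul₁, RingHom.id_apply, smul_eq_mul, mul_left_comm])
      (fun a b b' => by rw [hPadd₂, mul_add])
      (fun f a b => by rw [hPsmul₂, AlgHom.toRingHom_eq_coe, RingHom.coe_coe, smul_eq_mul,
        mul_left_comm])
  obtain ⟨a, ha, hdet_v⟩ : ∃ a : ℂ, a ≠ 0 ∧ (Q.gram v).det = C a := by
    obtain ⟨a, ha, hA_det⟩ := Polynomial.isUnit_iff.1 ((Matrix.isUnit_iff_isUnit_det A).1 hA_unit)
    refine ⟨a, ha.ne_zero, ?_⟩
    rw [show Q.gram v = Polynomial.toLaurent.mapMatrix A from Matrix.ext fun l m => (hA l m).symm,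
      ← RingHom.map_det, ← hA_det, Polynomial.toLaurent_C]
  constructor
  · rintro ⟨u, hu, G, hG, hG_unit⟩
    have hdet_u : (Q.gram u).det ≠ 0 := by
      rw [show Q.gram u = C.mapMatrix G from Matrix.ext fun i i' => hG i i', ← RingHom.map_det]
      exact ((isUnit_map_iff C _).2 ((Matrix.isUnit_iff_isUnit_det G).1 hG_unit)).ne_zero
    have hk_nonneg := nonneg_of_det_gram_ne_zero Q v k u hu hdet_u
    have hsum_nonpos := sum_nonpos_of_det_gram_mem_nonposSubring j hj Q v k ha hdet_v
      (Matrix.det_mem_subring _ _ fun i i' =>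
        show T (-w) * P _ _ ∈ nonposSubring ℂ from hB i i' ▸ hB_nonpos i i')
    intro i
    exact (Finset.sum_eq_zero_iff_of_nonneg fun l _ => hk_nonneg l).1
      (le_antisymm hsum_nonpos (Finset.sum_nonneg fun l _ => hk_nonneg l)) i (Finset.mem_univ i)
  · intro hk
    have hv : ∀ i, v i ∈ latticeZero v ⊓ latticeInfty v k := fun i =>
      ⟨Submodule.subset_span ⟨i, 0, by simp⟩, Submodule.subset_span ⟨i, 0, by simp [hk i]⟩⟩
    choose G hG using fun i i' => hconst (v i) (hv i) (v i') (hv i')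
    refine ⟨v, hv, Matrix.of G, hG, ?_⟩
    have hB_unit := Matrix.isUnit_det_of_right_inverse hBBinv
    rw [show B = C.mapMatrix (Matrix.of G) from Matrix.ext fun i i' => by simp [hB, hk, hG],
      ← RingHom.map_det, isUnit_map_iff] at hB_unit
    exact (Matrix.isUnit_iff_isUnit_det _).2 hB_unit

/-- With `W, v, k, P, j, w` as in the setting of lemma 2.6 of the paper:
there exist `u₁,…,u_μ ∈ L₀ ∩ L_∞` such that the complex matrix `(z^{-w}P(uᵢ,uⱼ))ᵢⱼ`
(whose entries are constant Laurent polynomials, identified with complex numbers) is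
invertible, if and only if `kᵢ = 0` for all `i`. -/
theorem stmt_13 (hμ : 1 ≤ μ) (w : ℤ)
    (v : Module.Basis (Fin μ) (LaurentPolynomial ℂ) W)
    (k : Fin μ → ℤ) (hk : Monotone k)
    (j : LaurentPolynomial ℂ →ₐ[ℂ] LaurentPolynomial ℂ) (hj : j (T 1) = -T 1)
    (P : W → W → LaurentPolynomial ℂ)
    (hPadd₁ : ∀ a a' b : W, P (a + a') b = P a b + P a' b)
    (hPadd₂ : ∀ a b b' : W, P a (b + b') = P a b + P a b')
    (hPsmul₁ : ∀ (f : LaurentPolynomial ℂ) (a b : W), P (f • a) b = f * P a b)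
    (hPsmul₂ : ∀ (f : LaurentPolynomial ℂ) (a b : W), P a (f • b) = j f * P a b)
    (hPsym : ∀ a b : W, P a b = LaurentPolynomial.C ((-1 : ℂ) ^ w) * j (P b a))
    (hmat₀ : ∃ A : Matrix (Fin μ) (Fin μ) (Polynomial ℂ), IsUnit A ∧
      ∀ i i', (A i i').toLaurent = T (-w) * P (v i) (v i'))
    (hmatInf : ∃ B Binv : Matrix (Fin μ) (Fin μ) (LaurentPolynomial ℂ),
      (∀ i i', B i i' =
        T (-w) * P ((T (k i) : LaurentPolynomial ℂ) • v i)
          ((T (k i') : LaurentPolynomial ℂ) • v i')) ∧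
      (∀ i i', ∀ m ∈ (B i i').coeff.support, m ≤ 0) ∧
      (∀ i i', ∀ m ∈ (Binv i i').coeff.support, m ≤ 0) ∧
      B * Binv = 1 ∧ Binv * B = 1)
    -- context fact: on `L₀ ∩ L_∞` the Laurent polynomial `z^{-w}·P(a,b)` is a constant
    (hconst : ∀ a ∈ latticeZero v ⊓ latticeInfty v k,
      ∀ b ∈ latticeZero v ⊓ latticeInfty v k, ∃ c : ℂ, T (-w) * P a b = LaurentPolynomial.C c) :
    (∃ u : Fin μ → W, (∀ i, u i ∈ latticeZero v ⊓ latticeInfty v k) ∧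
      ∃ G : Matrix (Fin μ) (Fin μ) ℂ,
        (∀ i i', T (-w) * P (u i) (u i') = LaurentPolynomial.C (G i i')) ∧ IsUnit G) ↔
    (∀ i, k i = 0) :=
  stmt_13_general w v k j hj P hPadd₁ hPadd₂ hPsmul₁ hPsmul₂ hmat₀ hmatInf hconst
end
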